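/- arXiv:1912.00708 — 6 statements merged into one kernel-verified Lean document; each statement's English description precedes it below -/
import Mathlib

section
/- For all real α with 0 ≤ α ≤ 1 and all real p ≥ 1.23, one has 1/2^α ≤ 1/(α+1) + (1 - 1/p)/(2(α+1)^2). -/
/-! Writing `2 ^ α = exp (α log 2)` with `log 2 > 0.6931`, the cubic Taylor polynomial of `exp`
reduces the claim for the smallest admissible value `1 - 1 / p = 23 / 123` to a polynomial
inequality in `α`. -/

open Real

noncomputable def expTaylor3 (x : ℝ) : ℝ := 1 + x + x ^ 2 / 2 + x ^ 3 / 6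

theorem expTaylor3_le_exp {x : ℝ} (hx : 0 ≤ x) : expTaylor3 x ≤ exp x := by
  have h := sum_le_exp_of_nonneg hx 4
  norm_num [Finset.sum_range_succ, Nat.factorial] at h
  exact h

theorem expTaylor3_mono {x y : ℝ} (hx : 0 ≤ x) (hxy : x ≤ y) : expTaylor3 x ≤ expTaylor3 y := by
  unfold expTaylor3
  gcongr

theorem expTaylor3_le_two_rpow {α : ℝ} (hα : 0 ≤ α) : expTaylor3 (0.6931 * α) ≤ (2 : ℝ) ^ α := by
  have hlog : (0.6931 : ℝ) ≤ log 2 := by linarith [log_two_gt_d9]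
  rw [rpow_def_of_pos two_pos]
  calc expTaylor3 (0.6931 * α) ≤ expTaylor3 (log 2 * α) :=
        expTaylor3_mono (by positivity) (mul_le_mul_of_nonneg_right hlog hα)
    _ ≤ exp (log 2 * α) := expTaylor3_le_exp (by positivity)

theorem sq_add_one_le_expTaylor3_mul {α : ℝ} (hα : 0 ≤ α) :
    (α + 1) ^ 2 ≤ expTaylor3 (0.6931 * α) * (α + 1 + 23 / 246) := by
  unfold expTaylor3
  -- the difference of the two sides is smallest near `α ≈ 0.53`
  nlinarith [mul_nonneg hα (sq_nonneg (α - 0.5325)), sq_nonneg (α - 0.5325)]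

theorem sq_add_one_le_two_rpow_mul {α : ℝ} (hα : 0 ≤ α) :
    (α + 1) ^ 2 ≤ (2 : ℝ) ^ α * (α + 1 + 23 / 246) :=
  (sq_add_one_le_expTaylor3_mul hα).trans <|
    mul_le_mul_of_nonneg_right (expTaylor3_le_two_rpow hα) (by positivity)

theorem one_div_le_of_sq_le_mul {a b c : ℝ} (ha : 0 < a) (hb : 0 < b)
    (h : b ^ 2 ≤ a * (b + c / 2)) : 1 / a ≤ 1 / b + c / (2 * b ^ 2) := by
  have hsum : 1 / b + c / (2 * b ^ 2) = (b + c / 2) / b ^ 2 := by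
    field_simp
  rw [hsum, div_le_div_iff₀ ha (by positivity)]
  linarith

theorem le_one_sub_one_div {p : ℝ} (hp : 1.23 ≤ p) : (23 / 123 : ℝ) ≤ 1 - 1 / p := by
  have : 1 / p ≤ 1 / 1.23 := one_div_le_one_div_of_le (by norm_num) hp
  norm_num at this ⊢
  linarith

theorem stmt0_general (α p : ℝ) (hα0 : 0 ≤ α) (hp : 1.23 ≤ p) :
    1 / (2 : ℝ) ^ α ≤ 1 / (α + 1) + (1 - 1 / p) / (2 * (α + 1) ^ 2) := by
  calc 1 / (2 : ℝ) ^ α ≤ 1 / (α + 1) + (23 / 123) / (2 * (α + 1) ^ 2) :=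
        one_div_le_of_sq_le_mul (by positivity) (by positivity) <| by
          convert sq_add_one_le_two_rpow_mul hα0 using 2
          norm_num
    _ ≤ 1 / (α + 1) + (1 - 1 / p) / (2 * (α + 1) ^ 2) := by
      gcongr
      exact le_one_sub_one_div hp

theorem stmt0 (α p : ℝ) (hα0 : 0 ≤ α) (hα1 : α ≤ 1) (hp : 1.23 ≤ p) :
    1 / (2 : ℝ) ^ α ≤ 1 / (α + 1) + (1 - 1 / p) / (2 * (α + 1) ^ 2) :=
  stmt0_general α p hα0 hp
end

section
/- The function v(α) = 2(α+1) - (1+α)^2·ln 2 - 2^α has a unique root on the open interval (0,1). -/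
/-! Since `ln 2 > 2/3`, the derivative `2 - 2(1+α) ln 2 - 2^α ln 2` of `v` is already negative at
`α = 0` and decreases from there, so `v` is strictly decreasing on `[0, ∞)`. As `v 0 = 1 - ln 2 > 0`
and `v 1 = 2 - 4 ln 2 < 0`, the intermediate value theorem gives exactly one root in `(0, 1)`. -/

open Real Set

theorem StrictAntiOn.existsUnique_mem_Ioo_eq {f : ℝ → ℝ} {a b y : ℝ} (hab : a ≤ b)
    (hcont : ContinuousOn f (Icc a b)) (hanti : StrictAntiOn f (Icc a b))
    (hy : y ∈ Ioo (f b) (f a)) : ∃! x, x ∈ Ioo a b ∧ f x = y := by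
  obtain ⟨x, hx, hfx⟩ := intermediate_value_Ioo' hab hcont hy
  refine ⟨x, ⟨hx, hfx⟩, fun x' ⟨hx', hfx'⟩ => ?_⟩
  exact hanti.injOn (Ioo_subset_Icc_self hx') (Ioo_subset_Icc_self hx) (hfx'.trans hfx.symm)

noncomputable def v (α : ℝ) : ℝ := 2 * (α + 1) - (1 + α) ^ 2 * log 2 - (2 : ℝ) ^ α

theorem hasDerivAt_v (α : ℝ) :
    HasDerivAt v (2 - 2 * (1 + α) * log 2 - (2 : ℝ) ^ α * log 2) α := by
  have hlin : HasDerivAt (fun x : ℝ => 2 * (x + 1)) 2 α := by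
    simpa using ((hasDerivAt_id α).add_const 1).const_mul 2
  have hquad : HasDerivAt (fun x : ℝ => (1 + x) ^ 2 * log 2) (2 * (1 + α) * log 2) α := by
    simpa [mul_comm] using (((hasDerivAt_id α).const_add 1).pow 2).mul_const (log 2)
  have hexp : HasDerivAt (fun x : ℝ => (2 : ℝ) ^ x) ((2 : ℝ) ^ α * log 2) α :=
    (hasStrictDerivAt_const_rpow two_pos α).hasDerivAt
  exact (hlin.sub hquad).sub hexp

theorem continuous_v : Continuous v :=
  continuous_iff_continuousAt.mpr fun α => (hasDerivAt_v α).continuousAt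

theorem strictAntiOn_v : StrictAntiOn v (Ici 0) := by
  refine strictAntiOn_of_deriv_neg (convex_Ici 0) continuous_v.continuousOn
    fun α hα => ?_
  rw [interior_Ici] at hα
  have hlog : (0.6931471803 : ℝ) < log 2 := log_two_gt_d9
  have hpow : 1 < (2 : ℝ) ^ α := one_lt_rpow one_lt_two hα
  rw [(hasDerivAt_v α).deriv]
  nlinarith [mem_Ioi.mp hα]

theorem v_zero_pos : 0 < v 0 := by
  have : log 2 < 0.6931471808 := log_two_lt_d9
  norm_num [v]
  linarith

theorem v_one_neg : v 1 < 0 := by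
  have : (0.6931471803 : ℝ) < log 2 := log_two_gt_d9
  norm_num [v]
  linarith

theorem stmt1 :
    ∃! α : ℝ, α ∈ Set.Ioo (0 : ℝ) 1 ∧
      2 * (α + 1) - (1 + α) ^ 2 * Real.log 2 - (2 : ℝ) ^ α = 0 :=
  (strictAntiOn_v.mono Icc_subset_Ici_self).existsUnique_mem_Ioo_eq zero_le_one
    continuous_v.continuousOn ⟨v_one_neg, v_zero_pos⟩
end

section
/- Let 4/3 ≤ p ≤ 3/2, 0 ≤ α ≤ 1/p, L = 1/(1+α), and let n ≥ 1 be an integer. Then for all x with 1/n ≤ x ≤ 1, (1 - (L/p)x)^(1-p) ≥ 1 + ((p-1)L/p)x + (1/2)(1 - 1/p)·(3n/(3n-1))·L²x². -/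
/-!
Put `q = p - 1` and `t = (L / p) x`, so that the claim reads
`(1 - t)^(-q) ≥ 1 + q t + q (q + 1) / 2 · 3n / (3n - 1) · t²`.
The key bound is the Padé-type inequality
`(1 - t)^(-q) ≥ 1 + q t + q (q + 1) / 2 · t² / (1 - r t)` with `r = (q + 2) / 3`, valid for
`0 ≤ q ≤ 1`, `0 ≤ t < 1`: the difference vanishes to second order at `t = 0`, and its second
derivative `q (q + 1) ((1 - t)^(-3r) - (1 - r t)^(-3))` is nonnegative by Bernoulli's inequality
`(1 - t)^r ≤ 1 - r t`. The hypotheses on `α` give `L ≥ p / (p + 1)`, hence `(q + 2) t ≥ 1 / n`,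
which turns `1 / (1 - r t)` into the factor `3n / (3n - 1)`.
-/

open Set

lemma le_of_hasDerivAt_nonneg {f f' : ℝ → ℝ} {a b : ℝ} (hab : a ≤ b)
    (hf : ∀ s ∈ Icc a b, HasDerivAt f (f' s) s) (hf' : ∀ s ∈ Icc a b, 0 ≤ f' s) : f a ≤ f b :=
  monotoneOn_of_hasDerivWithinAt_nonneg (convex_Icc a b)
    (fun s hs => (hf s hs).continuousAt.continuousWithinAt)
    (fun s hs => (hf s (interior_subset hs)).hasDerivWithinAt)
    (fun s hs => hf' s (interior_subset hs)) (left_mem_Icc.2 hab) (right_mem_Icc.2 hab) hab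

lemma hasDerivAt_one_sub_rpow (a : ℝ) {s : ℝ} (hs : s < 1) :
    HasDerivAt (fun s => (1 - s) ^ a) (-a * (1 - s) ^ (a - 1)) s := by
  simpa using ((hasDerivAt_id s).const_sub 1).rpow_const (p := a) (Or.inl (sub_ne_zero.2 hs.ne'))

lemma hasDerivAt_sq_div_one_sub_mul (r : ℝ) {s : ℝ} (hs : 1 - r * s ≠ 0) :
    HasDerivAt (fun s => s ^ 2 / (1 - r * s)) (s * (2 - r * s) / (1 - r * s) ^ 2) s := by
  have h := (hasDerivAt_pow 2 s).div (((hasDerivAt_id s).const_mul r).const_sub 1) hs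
  refine h.congr_deriv ?_
  simp only [id]
  ring

lemma hasDerivAt_mul_two_sub_mul_div_sq (r : ℝ) {s : ℝ} (hs : 1 - r * s ≠ 0) :
    HasDerivAt (fun s => s * (2 - r * s) / (1 - r * s) ^ 2) (2 / (1 - r * s) ^ 3) s := by
  have h := ((hasDerivAt_id s).mul (((hasDerivAt_id s).const_mul r).const_sub 2)).div
    ((((hasDerivAt_id s).const_mul r).const_sub 1).pow 2) (pow_ne_zero 2 hs)
  refine h.congr_deriv ?_
  simp only [id, Pi.pow_apply, Pi.mul_apply]
  field_simp
  ring

lemma one_sub_rpow_three_mul_le {r s : ℝ} (hr0 : 0 ≤ r) (hr1 : r ≤ 1) (hs : s ≤ 1) :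
    (1 - s) ^ (3 * r) ≤ (1 - r * s) ^ 3 := by
  have bernoulli : (1 - s) ^ r ≤ 1 - r * s := by
    simpa [sub_eq_add_neg] using rpow_one_add_le_one_add_mul_self (s := -s) (by linarith) hr0 hr1
  calc (1 - s) ^ (3 * r) = ((1 - s) ^ r) ^ 3 := by
        rw [mul_comm, ← Real.rpow_mul_natCast (by linarith)]; norm_num
    _ ≤ (1 - r * s) ^ 3 := pow_le_pow_left₀ (by positivity) bernoulli 3

theorem one_add_mul_add_div_le_one_sub_rpow_neg {q t : ℝ} (hq0 : 0 ≤ q) (hq1 : q ≤ 1)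
    (ht0 : 0 ≤ t) (ht1 : t < 1) :
    1 + q * t + q * (q + 1) / 2 * t ^ 2 / (1 - (q + 2) / 3 * t) ≤ (1 - t) ^ (-q) := by
  set r := (q + 2) / 3 with hr
  set B := q * (q + 1) / 2
  have hs1 : ∀ s ∈ Icc 0 t, s < 1 := fun s hs => hs.2.trans_lt ht1
  have hrs : ∀ s ∈ Icc 0 t, 0 < 1 - r * s := fun s hs => by nlinarith [hs.1, hs.2]
  have second_deriv_nonneg : ∀ s ∈ Icc 0 t,
      0 ≤ q * (-(-q - 1) * (1 - s) ^ (-q - 1 - 1)) - B * (2 / (1 - r * s) ^ 3) := by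
    intro s hs
    have hcube := one_sub_rpow_three_mul_le (r := r) (by positivity) (by linarith) (hs1 s hs).le
    have hinv : ((1 - r * s) ^ 3)⁻¹ ≤ (1 - s) ^ (-q - 1 - 1) := by
      rw [show -q - 1 - 1 = -(3 * r) by rw [hr]; ring, Real.rpow_neg (by linarith [hs1 s hs])]
      exact inv_anti₀ (Real.rpow_pos_of_pos (by linarith [hs1 s hs]) _) hcube
    have : 0 ≤ q * (q + 1) * ((1 - s) ^ (-q - 1 - 1) - ((1 - r * s) ^ 3)⁻¹) := by
      have := sub_nonneg.2 hinv
      positivity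
    convert this using 1
    ring
  have deriv_nonneg : ∀ s ∈ Icc 0 t,
      0 ≤ q * (1 - s) ^ (-q - 1) - q - B * (s * (2 - r * s) / (1 - r * s) ^ 2) := by
    intro s hs
    have hsub : Icc 0 s ⊆ Icc 0 t := Icc_subset_Icc_right hs.2
    have := le_of_hasDerivAt_nonneg hs.1
      (f := fun s => q * (1 - s) ^ (-q - 1) - q - B * (s * (2 - r * s) / (1 - r * s) ^ 2))
      (fun u hu => (((hasDerivAt_one_sub_rpow (-q - 1) (hs1 u (hsub hu))).const_mul q).sub_const q).sub
        ((hasDerivAt_mul_two_sub_mul_div_sq r (hrs u (hsub hu)).ne').const_mul B))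
      (fun u hu => second_deriv_nonneg u (hsub hu))
    simpa using this
  have := le_of_hasDerivAt_nonneg ht0
    (f := fun s => (1 - s) ^ (-q) - 1 - q * s - B * (s ^ 2 / (1 - r * s)))
    (fun s hs => ((((hasDerivAt_one_sub_rpow (-q) (hs1 s hs)).sub_const 1).sub
      ((hasDerivAt_id s).const_mul q)).sub
        ((hasDerivAt_sq_div_one_sub_mul r (hrs s hs).ne').const_mul B)).congr_deriv (by ring))
    deriv_nonneg
  norm_num at this
  rw [mul_div_assoc]
  linarith

theorem one_add_mul_add_mul_le_one_sub_rpow_neg {q t n : ℝ} (hq0 : 0 ≤ q) (hq1 : q ≤ 1)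
    (ht0 : 0 ≤ t) (ht1 : t < 1) (hn : 1 ≤ (q + 2) * n * t) :
    1 + q * t + q * (q + 1) / 2 * (3 * n / (3 * n - 1)) * t ^ 2 ≤ (1 - t) ^ (-q) := by
  have hrt : 0 < 1 - (q + 2) / 3 * t := by nlinarith
  have hn0 : 0 < n := by
    by_contra! h
    nlinarith [mul_nonneg (by linarith : (0 : ℝ) ≤ q + 2) ht0]
  have hn1 : 0 < 3 * n - 1 := by nlinarith
  have hfactor : 3 * n / (3 * n - 1) ≤ 1 / (1 - (q + 2) / 3 * t) := by
    rw [div_le_div_iff₀ hn1 hrt]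
    linarith
  calc 1 + q * t + q * (q + 1) / 2 * (3 * n / (3 * n - 1)) * t ^ 2
      ≤ 1 + q * t + q * (q + 1) / 2 * (1 / (1 - (q + 2) / 3 * t)) * t ^ 2 := by gcongr
    _ = 1 + q * t + q * (q + 1) / 2 * t ^ 2 / (1 - (q + 2) / 3 * t) := by ring
    _ ≤ (1 - t) ^ (-q) := one_add_mul_add_div_le_one_sub_rpow_neg hq0 hq1 ht0 ht1

theorem stmt3 (p α L x : ℝ) (n : ℕ) (hn : 1 ≤ n)
    (hp1 : 4 / 3 ≤ p) (hp2 : p ≤ 3 / 2) (hα0 : 0 ≤ α) (hα1 : α ≤ 1 / p)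
    (hL : L = 1 / (1 + α)) (hx1 : 1 / (n : ℝ) ≤ x) (hx2 : x ≤ 1) :
    (1 - L / p * x) ^ (1 - p) ≥
      1 + (p - 1) * L / p * x +
        1 / 2 * (1 - 1 / p) * (3 * (n : ℝ) / (3 * (n : ℝ) - 1)) * L ^ 2 * x ^ 2 := by
  have hp0 : 0 < p := by linarith
  have hn0 : (0 : ℝ) < n := by exact_mod_cast hn
  have hL0 : 0 < L := by rw [hL]; positivity
  have hL1 : L ≤ 1 := by rw [hL, div_le_one (by linarith)]; linarith
  have hLp : p ≤ (p + 1) * L := by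
    rw [hL, mul_one_div, le_div_iff₀ (by linarith)]
    nlinarith [(le_div_iff₀' hp0).1 hα1]
  have hnx : 1 ≤ n * x := by rwa [div_le_iff₀' hn0] at hx1
  have hx0 : 0 < x := lt_of_lt_of_le (by positivity) hx1
  have ht0 : 0 ≤ L / p * x := by positivity
  have ht1 : L / p * x < 1 := by
    rw [div_mul_eq_mul_div, div_lt_one hp0]
    nlinarith
  have htn : 1 ≤ (p - 1 + 2) * n * (L / p * x) := by
    rw [show (p - 1 + 2) * n * (L / p * x) = (p + 1) * L / p * (n * x) by field_simp; ring]
    exact one_le_mul_of_one_le_of_one_le ((one_le_div hp0).2 hLp) hnx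
  have key := one_add_mul_add_mul_le_one_sub_rpow_neg (by linarith) (by linarith) ht0 ht1 htn
  rw [neg_sub] at key
  convert key using 2
  · ring
  · field_simp
    ring
end

section
/- Let n ≥ 1 be an integer, 0 ≤ x ≤ 1/n, and 0 ≤ α ≤ 1. Then (1+x)^(-α) ≥ 1 - αx + α(α+1)·(n/(2(n+1)))·x². -/
/-!
Write `(1 + x) ^ (-α) = (1 + x) ^ (1 - α) / (1 + x)` and bound the numerator from below by the
second-order Bernoulli inequality `(1 + x) ^ s ≥ 1 + s x - s (1 - s) x² / 2` for `s = 1 - α`;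
the difference of its two sides is monotone because its derivative is controlled by the
first-order Bernoulli inequality for the exponent `s - 1`.
Multiplying the claimed bound by `1 + x` leaves a deficit of `α (α + 1) x² (1/2 - c (1 + x))`
with `c = n / (2 (n + 1))`, and `c (1 + x) ≤ 1/2` is exactly `n x ≤ 1`.
-/

open Real Set

lemma one_sub_mul_le_one_add_rpow_neg {t z : ℝ} (hz : -1 < z) (ht0 : 0 ≤ t) (ht1 : t ≤ 1) :
    1 - t * z ≤ (1 + z) ^ (-t) := by
  have hpos : 0 < 1 + t * z := by
    rcases ht1.lt_or_eq with ht1 | rfl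
    · nlinarith [mul_le_mul_of_nonneg_left hz.le ht0]
    · linarith
  calc 1 - t * z ≤ (1 + t * z)⁻¹ := by
        rw [← one_div, le_div_iff₀ hpos]
        nlinarith [sq_nonneg (t * z)]
    _ ≤ ((1 + z) ^ t)⁻¹ := by
        gcongr
        · exact rpow_pos_of_pos (by linarith) t
        · exact rpow_one_add_le_one_add_mul_self hz.le ht0 ht1
    _ = (1 + z) ^ (-t) := (rpow_neg (by linarith) t).symm

lemma one_add_mul_sub_le_one_add_rpow {s y : ℝ} (hs0 : 0 ≤ s) (hs1 : s ≤ 1) (hy : 0 ≤ y) :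
    1 + s * y - s * (1 - s) / 2 * y ^ 2 ≤ (1 + y) ^ s := by
  set f : ℝ → ℝ := fun z ↦ (1 + z) ^ s - (1 + s * z - s * (1 - s) / 2 * z ^ 2)
  set f' : ℝ → ℝ := fun z ↦ s * ((1 + z) ^ (-(1 - s)) - (1 - (1 - s) * z))
  have hf' : ∀ z, -1 < z → HasDerivAt f (f' z) z := by
    intro z hz
    have hpow : HasDerivAt (fun z ↦ (1 + z) ^ s) (1 * s * (1 + z) ^ (s - 1)) z :=
      ((hasDerivAt_id' z).const_add 1).rpow_const (Or.inl (by linarith))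
    refine (hpow.sub ((((hasDerivAt_id' z).const_mul s).const_add 1).sub
      ((hasDerivAt_pow 2 z).const_mul (s * (1 - s) / 2)))).congr_deriv ?_
    simp only [f', neg_sub]
    norm_num
    ring
  have hmono : MonotoneOn f (Ici 0) := by
    refine monotoneOn_of_hasDerivWithinAt_nonneg (convex_Ici 0)
      (fun z hz ↦ (hf' z (by linarith [mem_Ici.1 hz])).continuousAt.continuousWithinAt)
      (fun z hz ↦ (hf' z ?_).hasDerivWithinAt) fun z hz ↦ ?_
    all_goals rw [interior_Ici, mem_Ioi] at hz
    · linarith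
    · exact mul_nonneg hs0 (sub_nonneg.2
        (one_sub_mul_le_one_add_rpow_neg (by linarith) (by linarith) (by linarith)))
  have hf0 := hmono self_mem_Ici hy hy
  simp only [f, add_zero, one_rpow, mul_zero, zero_pow two_ne_zero, sub_zero, sub_self] at hf0
  linarith

theorem stmt4_general (n : ℕ) (x α : ℝ) (hx0 : 0 ≤ x) (hx1 : x ≤ 1 / (n : ℝ))
    (hα0 : 0 ≤ α) (hα1 : α ≤ 1) :
    (1 + x) ^ (-α) ≥ 1 - α * x + α * (α + 1) * ((n : ℝ) / (2 * ((n : ℝ) + 1))) * x ^ 2 := by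
  set c : ℝ := (n : ℝ) / (2 * ((n : ℝ) + 1))
  have hx : 0 < 1 + x := by linarith
  have hnx : (n : ℝ) * x ≤ 1 :=
    (mul_le_mul_of_nonneg_left hx1 n.cast_nonneg).trans (by simpa using mul_inv_le_one)
  have hc : c * (1 + x) ≤ 1 / 2 := by
    rw [div_mul_eq_mul_div, div_le_iff₀ (by positivity)]
    linarith
  have hsplit : (1 + x) ^ (-α) = (1 + x) ^ (1 - α) / (1 + x) := by
    rw [sub_eq_neg_add, rpow_add hx, rpow_one, mul_div_cancel_right₀ _ hx.ne']
  have hbernoulli := one_add_mul_sub_le_one_add_rpow (sub_nonneg.2 hα1) (by linarith) hx0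
  rw [ge_iff_le, hsplit, le_div_iff₀ hx]
  have hdeficit : 1 + (1 - α) * x - (1 - α) * (1 - (1 - α)) / 2 * x ^ 2
      - (1 - α * x + α * (α + 1) * c * x ^ 2) * (1 + x)
      = α * (α + 1) * x ^ 2 * (1 / 2 - c * (1 + x)) := by ring
  have hdeficit_nonneg : 0 ≤ α * (α + 1) * x ^ 2 * (1 / 2 - c * (1 + x)) :=
    mul_nonneg (by positivity) (sub_nonneg.2 hc)
  linarith

theorem stmt4 (n : ℕ) (hn : 1 ≤ n) (x α : ℝ) (hx0 : 0 ≤ x) (hx1 : x ≤ 1 / (n : ℝ))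
    (hα0 : 0 ≤ α) (hα1 : α ≤ 1) :
    (1 + x) ^ (-α) ≥ 1 - α * x + α * (α + 1) * ((n : ℝ) / (2 * ((n : ℝ) + 1))) * x ^ 2 :=
  stmt4_general n x α hx0 hx1 hα0 hα1
end

section
/- For every integer n ≥ 1 and every real p with 1 < p ≤ 1/(2(1-ln 2)), one has ln(1 + 1/n) - 1/n + 1/(p·n(n+1)) ≥ 0. -/
/-!
With `t = 1 / n` and `k = 1 / p ≥ 2 (1 - log 2)`, the claim reads `G t ≥ 0` for
`G t = log (1 + t) - t + k t² / (1 + t)`. Since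
`G' t = t (2k - 1 + (k - 1) t) / (1 + t)²`, for `k < 1` the function `G` increases and then
decreases on `[0, 1]`, so it is bounded below by `min (G 0) (G 1)`. For the extremal value
`k = 2 (1 - log 2)` both `G 0` and `G 1` vanish, and `G` is increasing in `k`.
-/

open Real Set

theorem min_le_of_hasDerivAt_nonneg_of_nonpos {f f' : ℝ → ℝ} {a b c x : ℝ}
    (hf : ContinuousOn f (Icc a b)) (hf' : ∀ y ∈ Ioo a b, HasDerivAt f (f' y) y)
    (hinc : ∀ y ∈ Ioo a b, y ≤ c → 0 ≤ f' y) (hdec : ∀ y ∈ Ioo a b, c ≤ y → f' y ≤ 0)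
    (hx : x ∈ Icc a b) : min (f a) (f b) ≤ f x := by
  rcases le_total x c with hxc | hcx
  · have hmono : MonotoneOn f (Icc a x) := by
      refine monotoneOn_of_hasDerivWithinAt_nonneg (f' := f') (convex_Icc a x)
        (hf.mono (Icc_subset_Icc_right hx.2)) (fun y hy => ?_) (fun y hy => ?_) <;>
        rw [interior_Icc] at hy
      · exact (hf' y ⟨hy.1, hy.2.trans_le hx.2⟩).hasDerivWithinAt
      · exact hinc y ⟨hy.1, hy.2.trans_le hx.2⟩ (hy.2.le.trans hxc)
    exact (min_le_left _ _).trans (hmono (left_mem_Icc.2 hx.1) (right_mem_Icc.2 hx.1) hx.1)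
  · have hanti : AntitoneOn f (Icc x b) := by
      refine antitoneOn_of_hasDerivWithinAt_nonpos (f' := f') (convex_Icc x b)
        (hf.mono (Icc_subset_Icc_left hx.1)) (fun y hy => ?_) (fun y hy => ?_) <;>
        rw [interior_Icc] at hy
      · exact (hf' y ⟨hx.1.trans_lt hy.1, hy.2⟩).hasDerivWithinAt
      · exact hdec y ⟨hx.1.trans_lt hy.1, hy.2⟩ (hcx.trans hy.1.le)
    exact (min_le_right _ _).trans (hanti (left_mem_Icc.2 hx.2) (right_mem_Icc.2 hx.2) hx.2)

theorem hasDerivAt_log_one_add_sub_add_mul_sq_div (k : ℝ) {t : ℝ} (ht : -1 < t) :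
    HasDerivAt (fun x => log (1 + x) - x + k * x ^ 2 / (1 + x))
      (t * (2 * k - 1 + (k - 1) * t) / (1 + t) ^ 2) t := by
  have h1 : 1 + t ≠ 0 := by linarith
  have hlin : HasDerivAt (fun x => 1 + x) 1 t := (hasDerivAt_id' t).const_add 1
  have hderiv := ((hlin.log h1).sub (hasDerivAt_id' t)).add
    (((hasDerivAt_pow 2 t).const_mul k).div hlin h1)
  refine hderiv.congr_deriv ?_
  field_simp
  ring

theorem log_one_add_sub_add_mul_sq_div_nonneg {k t : ℝ} (hk : 2 * (1 - log 2) ≤ k)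
    (ht : t ∈ Icc 0 1) : 0 ≤ log (1 + t) - t + k * t ^ 2 / (1 + t) := by
  set k₀ := 2 * (1 - log 2) with hk₀
  suffices 0 ≤ log (1 + t) - t + k₀ * t ^ 2 / (1 + t) by
    have : k₀ * t ^ 2 / (1 + t) ≤ k * t ^ 2 / (1 + t) := by
      have : 0 ≤ 1 + t := by linarith [ht.1]
      gcongr
    linarith
  have hk₀_lt : k₀ < 1 := by linarith [log_two_gt_d9]
  have hderiv : ∀ y ∈ Icc (0 : ℝ) 1, HasDerivAt (fun x => log (1 + x) - x + k₀ * x ^ 2 / (1 + x))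
      (y * (2 * k₀ - 1 + (k₀ - 1) * y) / (1 + y) ^ 2) y :=
    fun y hy => hasDerivAt_log_one_add_sub_add_mul_sq_div k₀ (by linarith [hy.1])
  have hmin := min_le_of_hasDerivAt_nonneg_of_nonpos
    (f := fun x => log (1 + x) - x + k₀ * x ^ 2 / (1 + x)) (c := (2 * k₀ - 1) / (1 - k₀))
    (fun y hy => (hderiv y hy).continuousAt.continuousWithinAt)
    (fun y hy => hderiv y (Ioo_subset_Icc_self hy)) (fun y hy hyc => ?_) (fun y hy hcy => ?_) ht
  · refine le_trans (le_min ?_ ?_) hmin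
    · simp
    · norm_num [hk₀]
  · rw [le_div_iff₀ (by linarith)] at hyc
    have : 0 ≤ 2 * k₀ - 1 + (k₀ - 1) * y := by linarith
    have := hy.1.le
    positivity
  · rw [div_le_iff₀ (by linarith)] at hcy
    have : 2 * k₀ - 1 + (k₀ - 1) * y ≤ 0 := by linarith
    exact div_nonpos_of_nonpos_of_nonneg (mul_nonpos_of_nonneg_of_nonpos hy.1.le this)
      (sq_nonneg _)

theorem stmt5 (n : ℕ) (hn : 1 ≤ n) (p : ℝ) (hp1 : 1 < p)
    (hp2 : p ≤ 1 / (2 * (1 - Real.log 2))) :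
    Real.log (1 + 1 / (n : ℝ)) - 1 / (n : ℝ) + 1 / (p * (n : ℝ) * ((n : ℝ) + 1)) ≥ 0 := by
  have hn' : (1 : ℝ) ≤ n := by exact_mod_cast hn
  have hp : 0 < p := by linarith
  have hk : 2 * (1 - log 2) ≤ 1 / p :=
    (le_one_div hp (by linarith [log_two_lt_d9])).1 hp2
  have ht : 1 / (n : ℝ) ∈ Icc 0 1 := ⟨by positivity, (div_le_one (by linarith)).2 hn'⟩
  have key := log_one_add_sub_add_mul_sq_div_nonneg hk ht
  have hrw : 1 / p * (1 / (n : ℝ)) ^ 2 / (1 + 1 / n) = 1 / (p * n * (n + 1)) := by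
    field_simp
  rwa [hrw] at key
end

section
/- Let p > 1 and let A be the weighted mean matrix with entries a_{n,k} = λ_k/Λ_n for k ≤ n (0 otherwise), where λ_i ≥ 0, λ_1 > 0, Λ_n = Σ_{i=1}^n λ_i. If there is a constant 0 < L < p such that for all n ≥ 1, Λ_{n+1}/λ_{n+1} ≤ (Λ_n/λ_n)(1 - Lλ_n/(pΛ_n))^{1-p} + L/p, then for every sequence a ∈ l^p, Σ_n |Σ_{k≤n} a_{n,k} a_k|^p ≤ (p/(p-L))^p Σ_n |a_n|^p. -/
/-!
With `r = L / p`, `c = (1 - r)⁻¹ = p / (p - L)`, `μₙ = Λₙ / λₙ` and `Aₙ` the `n`-th weighted mean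
of `|a|`, one has `μₙ₊₁ Aₙ₊₁ = |aₙ₊₁| + (μₙ₊₁ - 1) Aₙ`. Convexity of `t ↦ t ^ p`, with weights
`(1 - r) / (μ - r)` and `(μ - 1) / (μ - r)`, turns this into
`(μ - r) ^ (1 - p) (μ A') ^ p ≤ (1 - r) ^ (1 - p) |a'| ^ p + (μ - 1) A ^ p`, and the growth
condition on the weights then keeps `∑_{n < N} Aₙ ^ p + c ψ(μ_N) A_N ^ p - c ^ p ∑_{n ≤ N} |aₙ| ^ p`
nonpositive, where `ψ(μ) = μ (1 - r / μ) ^ (1 - p) ≥ 1` (`potential` below).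

If some `λₙ` vanishes, the growth condition (where `Λₙ / 0 = 0`) forces all later weights to
vanish, so the means are eventually constant: the series then either diverges, and its `tsum` is
`0`, or has finitely many nonzero terms, all controlled by the positive case.
-/

open Finset

lemma rpow_add_mul_le {p α β u x : ℝ} (hp : 1 ≤ p) (hα : 0 < α) (hβ : 0 ≤ β)
    (hu : 0 ≤ u) (hx : 0 ≤ x) :
    (α + β) ^ (1 - p) * (u + β * x) ^ p ≤ α ^ (1 - p) * u ^ p + β * x ^ p := by
  have hd : 0 < α + β := by linarith
  have hjensen : ((u + β * x) / (α + β)) ^ p ≤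
      α / (α + β) * (u / α) ^ p + β / (α + β) * x ^ p := by
    have h := (convexOn_rpow hp).2 (x := u / α) (y := x) (div_nonneg hu hα.le) hx
      (div_nonneg hα.le hd.le) (div_nonneg hβ hd.le) (by rw [← add_div, div_self hd.ne'])
    simp only [smul_eq_mul] at h
    rwa [show α / (α + β) * (u / α) + β / (α + β) * x = (u + β * x) / (α + β) by field_simp] at h
  rw [Real.div_rpow (by positivity) hd.le, Real.div_rpow hu hα.le] at hjensen
  rw [Real.rpow_sub hd, Real.rpow_sub hα, Real.rpow_one, Real.rpow_one]
  have hdp : 0 < (α + β) ^ p := by positivity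
  have hαp : 0 < α ^ p := by positivity
  calc (α + β) / (α + β) ^ p * (u + β * x) ^ p
      = (α + β) * ((u + β * x) ^ p / (α + β) ^ p) := by ring
    _ ≤ (α + β) * (α / (α + β) * (u ^ p / α ^ p) + β / (α + β) * x ^ p) := by gcongr
    _ = α / α ^ p * u ^ p + β * x ^ p := by field_simp

lemma inv_mul_rpow_one_sub {q : ℝ} (hq : 0 < q) (p : ℝ) : q⁻¹ * q ^ (1 - p) = q⁻¹ ^ p := by
  rw [Real.inv_rpow hq.le, Real.rpow_sub hq, Real.rpow_one]
  field_simp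

lemma le_sum_Icc {lam : ℕ → ℝ} (hlam : ∀ i, 0 ≤ lam i) {n : ℕ} (hn : 1 ≤ n) :
    lam n ≤ ∑ i ∈ Icc 1 n, lam i :=
  single_le_sum (fun i _ => hlam i) (mem_Icc.2 ⟨hn, le_rfl⟩)

lemma sum_Icc_eq_of_forall_gt_eq_zero {M : Type*} [AddCommMonoid M] {g : ℕ → M} {m n : ℕ}
    (hg : ∀ k, m < k → g k = 0) (hmn : m ≤ n) :
    ∑ k ∈ Icc 1 n, g k = ∑ k ∈ Icc 1 m, g k :=
  (sum_subset (Icc_subset_Icc le_rfl hmn) fun k hk hkm => hg k (by simp at hk hkm; omega)).symm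

lemma norm_sum_ofReal_div_mul_le (s : Finset ℕ) {w : ℕ → ℝ} (hw : ∀ k, 0 ≤ w k) {D : ℝ}
    (hD : 0 ≤ D) (a : ℕ → ℂ) :
    ‖∑ k ∈ s, ((w k / D : ℝ) : ℂ) * a k‖ ≤ (∑ k ∈ s, w k * ‖a k‖) / D := by
  rw [sum_div]
  refine (norm_sum_le _ _).trans (le_of_eq (sum_congr rfl fun k _ => ?_))
  rw [norm_mul, Complex.norm_real, Real.norm_of_nonneg (div_nonneg (hw k) hD), div_mul_eq_mul_div]

lemma tsum_le_of_eventually_const {f : ℕ → ℝ} {m : ℕ} {C : ℝ} (hf : ∀ n, 0 ≤ f n)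
    (hconst : ∀ n, m ≤ n → f n = f m) (hsum : ∑ n ∈ range (m + 1), f n ≤ C) :
    ∑' n, f n ≤ C := by
  by_cases hm : f m = 0
  · rwa [tsum_eq_sum (s := range (m + 1))]
    intro n hn
    rw [hconst n (by simp at hn; omega), hm]
  · have hnot : ¬ Summable f := fun hs => hm <| tendsto_nhds_unique
      (tendsto_const_nhds.congr' (Filter.eventually_atTop.2 ⟨m, fun n hn => (hconst n hn).symm⟩))
      hs.tendsto_atTop_zero
    rw [tsum_eq_zero_of_not_summable hnot]
    exact (sum_nonneg fun n _ => hf n).trans hsum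

/-- With `μ = Λₙ / λₙ` and `r = L / p`, the growth condition on the weights reads
`μₙ₊₁ ≤ potential p r μₙ + r`. -/
noncomputable def potential (p r μ : ℝ) : ℝ := μ * (1 - r / μ) ^ (1 - p)

section Potential

variable {p r μ : ℝ}

lemma le_potential (hp : 1 ≤ p) (hr : 0 ≤ r) (hrμ : r < μ) : μ ≤ potential p r μ := by
  have hμ : 0 < μ := hr.trans_lt hrμ
  refine le_mul_of_one_le_right hμ.le (Real.one_le_rpow_of_pos_of_le_one_of_nonpos ?_ ?_ ?_)
  · rw [sub_pos, div_lt_one hμ]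
    exact hrμ
  · linarith [div_nonneg hr hμ.le]
  · linarith

lemma potential_mul_rpow {y : ℝ} (hμ : 0 < μ) (hrμ : r ≤ μ) (hy : 0 ≤ y) :
    potential p r μ * y ^ p = (μ - r) ^ (1 - p) * (μ * y) ^ p := by
  rw [potential, one_sub_div hμ.ne', Real.div_rpow (by linarith) hμ.le, Real.mul_rpow hμ.le hy,
    Real.rpow_sub hμ, Real.rpow_one]
  have : 0 < μ ^ p := by positivity
  field_simp

lemma potential_mul_rpow_le {u x y : ℝ} (hp : 1 ≤ p) (hr : r < 1) (hμ : 1 ≤ μ)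
    (hu : 0 ≤ u) (hx : 0 ≤ x) (hy : μ * y = u + (μ - 1) * x) :
    potential p r μ * y ^ p ≤ (1 - r) ^ (1 - p) * u ^ p + (μ - 1) * x ^ p := by
  have hμ0 : 0 < μ := by linarith
  have hy0 : 0 ≤ y := (mul_nonneg_iff_of_pos_left hμ0).1 (by rw [hy]; nlinarith)
  rw [potential_mul_rpow hμ0 (by linarith) hy0, hy]
  convert rpow_add_mul_le hp (sub_pos.2 hr) (sub_nonneg.2 hμ) hu hx using 3
  ring

variable {μ A B : ℕ → ℝ}

lemma sum_rpow_add_potential_le (hp : 1 ≤ p) (hr : r < 1) (hA : ∀ n, 0 ≤ A n)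
    (hB : ∀ n, 0 ≤ B n) (hμ0 : μ 0 = 1) (hA0 : A 0 = B 0) (N : ℕ) (hμ : ∀ n ≤ N, 1 ≤ μ n)
    (hstep : ∀ n < N, μ (n + 1) * A (n + 1) = B (n + 1) + (μ (n + 1) - 1) * A n)
    (hgrowth : ∀ n < N, μ (n + 1) ≤ potential p r (μ n) + r) :
    ∑ n ∈ range N, A n ^ p + (1 - r)⁻¹ * potential p r (μ N) * A N ^ p ≤
      (1 - r)⁻¹ ^ p * ∑ n ∈ range (N + 1), B n ^ p := by
  have hq : 0 < 1 - r := sub_pos.2 hr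
  induction N with
  | zero =>
    simp only [range_zero, sum_empty, zero_add, range_one, sum_singleton, potential, hμ0, hA0,
      div_one, one_mul, inv_mul_rpow_one_sub hq, le_refl]
  | succ N ih =>
    have ih := ih (fun n hn => hμ n (by omega)) (fun n hn => hstep n (by omega))
      (fun n hn => hgrowth n (by omega))
    have hdecay := mul_le_mul_of_nonneg_left (potential_mul_rpow_le hp hr (hμ (N + 1) le_rfl)
      (hB (N + 1)) (hA N) (hstep N N.lt_succ_self)) (inv_nonneg.2 hq.le)
    rw [mul_add, ← mul_assoc _ ((1 - r) ^ (1 - p)), inv_mul_rpow_one_sub hq] at hdecay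
    have hgrowth' := mul_le_mul_of_nonneg_right (mul_le_mul_of_nonneg_left
      (sub_le_sub_right (hgrowth N N.lt_succ_self) 1) (inv_nonneg.2 hq.le))
      (Real.rpow_nonneg (hA N) p)
    have hc : (1 - r)⁻¹ * (potential p r (μ N) + r - 1) =
        (1 - r)⁻¹ * potential p r (μ N) - 1 := by
      field_simp
      ring
    rw [hc] at hgrowth'
    rw [sum_range_succ, sum_range_succ _ (N + 1)]
    linarith

lemma sum_range_rpow_le_of_potential (hp : 1 ≤ p) (hr0 : 0 ≤ r) (hr : r < 1)
    (hA : ∀ n, 0 ≤ A n) (hB : ∀ n, 0 ≤ B n) (hμ0 : μ 0 = 1) (hA0 : A 0 = B 0) (N : ℕ)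
    (hμ : ∀ n ≤ N, 1 ≤ μ n)
    (hstep : ∀ n < N, μ (n + 1) * A (n + 1) = B (n + 1) + (μ (n + 1) - 1) * A n)
    (hgrowth : ∀ n < N, μ (n + 1) ≤ potential p r (μ n) + r) :
    ∑ n ∈ range (N + 1), A n ^ p ≤ (1 - r)⁻¹ ^ p * ∑ n ∈ range (N + 1), B n ^ p := by
  have hc : 1 ≤ (1 - r)⁻¹ := (one_le_inv₀ (by linarith)).2 (by linarith)
  have hψ : 1 ≤ potential p r (μ N) :=
    (hμ N le_rfl).trans (le_potential hp hr0 (by linarith [hμ N le_rfl]))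
  have hlast : A N ^ p ≤ (1 - r)⁻¹ * potential p r (μ N) * A N ^ p :=
    le_mul_of_one_le_left (Real.rpow_nonneg (hA N) p) (one_le_mul_of_one_le_of_one_le hc hψ)
  rw [sum_range_succ]
  linarith [sum_rpow_add_potential_le hp hr hA hB hμ0 hA0 N hμ hstep hgrowth]

end Potential

section Weights

variable {p r : ℝ} {lam Λ : ℕ → ℝ}

lemma sum_weighted_mean_rpow_le (hp : 1 ≤ p) (hr0 : 0 ≤ r) (hr : r < 1) {B : ℕ → ℝ}
    (hlam : ∀ i, 0 ≤ lam i) (hΛ : ∀ n, Λ n = ∑ i ∈ Icc 1 n, lam i) (hB : ∀ i, 0 ≤ B i)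
    (hcond : ∀ n, 1 ≤ n → Λ (n + 1) / lam (n + 1) ≤ potential p r (Λ n / lam n) + r)
    (N : ℕ) (hpos : ∀ k, 1 ≤ k → k ≤ N → 0 < lam k) :
    ∑ n ∈ range N, ((∑ k ∈ Icc 1 (n + 1), lam k * B k) / Λ (n + 1)) ^ p ≤
      (1 - r)⁻¹ ^ p * ∑ n ∈ range N, B (n + 1) ^ p := by
  rcases N with _ | N
  · simp
  have hΛpos : ∀ n ≤ N, 0 < Λ (n + 1) := fun n hn =>
    (hpos (n + 1) (by omega) (by omega)).trans_le (hΛ (n + 1) ▸ le_sum_Icc hlam (by omega))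
  have hΛ1 : Λ 1 = lam 1 := by simp [hΛ]
  refine sum_range_rpow_le_of_potential (μ := fun n => Λ (n + 1) / lam (n + 1))
    (A := fun n => (∑ k ∈ Icc 1 (n + 1), lam k * B k) / Λ (n + 1)) (B := fun n => B (n + 1))
    hp hr0 hr (fun n => div_nonneg (sum_nonneg fun k _ => mul_nonneg (hlam k) (hB k))
      (hΛ (n + 1) ▸ sum_nonneg fun i _ => hlam i)) (fun n => hB (n + 1)) ?_ ?_ N
    (fun n hn => ?_) (fun n hn => ?_) (fun n hn => hcond (n + 1) (by omega))
  · simp [hΛ1, (hpos 1 le_rfl (by omega)).ne']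
  · simp [hΛ1, (hpos 1 le_rfl (by omega)).ne']
  · rw [hΛ]
    exact (one_le_div (hpos (n + 1) (by omega) (by omega))).2 (le_sum_Icc hlam (by omega))
  · have hlam' := (hpos (n + 2) (by omega) (by omega)).ne'
    have hΛ' := (hΛpos n (by omega)).ne'
    have hΛsucc : Λ (n + 2) = Λ (n + 1) + lam (n + 2) := by
      rw [hΛ, hΛ, sum_Icc_succ_top (by omega)]
    have hΛ'' : Λ (n + 1) + lam (n + 2) ≠ 0 := hΛsucc ▸ (hΛpos (n + 1) (by omega)).ne'
    simp only [sum_Icc_succ_top (by omega : 1 ≤ n + 1 + 1) (fun k => lam k * B k), hΛsucc]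
    field_simp
    ring

lemma eq_zero_of_le_of_eq_zero (hr : r < 1) (hlam : ∀ i, 0 ≤ lam i)
    (hΛ : ∀ n, Λ n = ∑ i ∈ Icc 1 n, lam i)
    (hcond : ∀ n, 1 ≤ n → Λ (n + 1) / lam (n + 1) ≤ potential p r (Λ n / lam n) + r)
    {n k : ℕ} (hn : 1 ≤ n) (hzero : lam n = 0) (hk : n ≤ k) : lam k = 0 := by
  induction k, hk using Nat.le_induction with
  | base => exact hzero
  | succ k hk ih =>
    by_contra hne
    have hpos : 0 < lam (k + 1) := (hlam _).lt_of_ne (Ne.symm hne)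
    have hgrowth := hcond k (hn.trans hk)
    rw [ih, div_zero, potential, zero_mul, zero_add, hΛ, div_le_iff₀ hpos] at hgrowth
    nlinarith [le_sum_Icc hlam (Nat.le_add_left 1 k)]

lemma pos_or_eventually_eq_zero (hr : r < 1) (hlam : ∀ i, 0 ≤ lam i) (hlam1 : 0 < lam 1)
    (hΛ : ∀ n, Λ n = ∑ i ∈ Icc 1 n, lam i)
    (hcond : ∀ n, 1 ≤ n → Λ (n + 1) / lam (n + 1) ≤ potential p r (Λ n / lam n) + r) :
    (∀ k, 1 ≤ k → 0 < lam k) ∨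
      ∃ m, (∀ k, 1 ≤ k → k ≤ m + 1 → 0 < lam k) ∧ ∀ k, m + 1 < k → lam k = 0 := by
  by_cases hall : ∀ k, 1 ≤ k → 0 < lam k
  · exact Or.inl hall
  right
  classical
  have hex : ∃ k, 1 ≤ k ∧ lam k = 0 := by
    simp only [not_forall, not_lt] at hall
    obtain ⟨k, hk, hk0⟩ := hall
    exact ⟨k, hk, le_antisymm hk0 (hlam k)⟩
  obtain ⟨hk1, hk0⟩ := Nat.find_spec hex
  have hk2 : 2 ≤ Nat.find hex := by
    by_contra h
    rw [show Nat.find hex = 1 by omega] at hk0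
    exact hlam1.ne' hk0
  refine ⟨Nat.find hex - 2, fun k hk hkm => ?_, fun k hk =>
    eq_zero_of_le_of_eq_zero hr hlam hΛ hcond hk1 hk0 (by omega)⟩
  have hmin := Nat.find_min hex (show k < Nat.find hex by omega)
  exact (hlam k).lt_of_ne fun h => hmin ⟨hk, h.symm⟩

lemma weighted_mean_eq_of_forall_gt_eq_zero
    (hΛ : ∀ n, Λ n = ∑ i ∈ Icc 1 n, lam i) {m n : ℕ} (hzero : ∀ k, m < k → lam k = 0)
    (hmn : m ≤ n) (a : ℕ → ℂ) :
    ∑ k ∈ Icc 1 n, ((lam k / Λ n : ℝ) : ℂ) * a k =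
      ∑ k ∈ Icc 1 m, ((lam k / Λ m : ℝ) : ℂ) * a k := by
  have hΛeq : Λ n = Λ m := by rw [hΛ, hΛ, sum_Icc_eq_of_forall_gt_eq_zero hzero hmn]
  rw [hΛeq, sum_Icc_eq_of_forall_gt_eq_zero (fun k hk => by simp [hzero k hk]) hmn]

lemma sum_norm_weighted_mean_rpow_le (hp : 1 ≤ p) (hr0 : 0 ≤ r) (hr : r < 1)
    (hlam : ∀ i, 0 ≤ lam i) (hΛ : ∀ n, Λ n = ∑ i ∈ Icc 1 n, lam i)
    (hcond : ∀ n, 1 ≤ n → Λ (n + 1) / lam (n + 1) ≤ potential p r (Λ n / lam n) + r)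
    (a : ℕ → ℂ) (N : ℕ) (hpos : ∀ k, 1 ≤ k → k ≤ N → 0 < lam k) :
    ∑ n ∈ range N, ‖∑ k ∈ Icc 1 (n + 1), ((lam k / Λ (n + 1) : ℝ) : ℂ) * a k‖ ^ p ≤
      (1 - r)⁻¹ ^ p * ∑ n ∈ range N, ‖a (n + 1)‖ ^ p :=
  (sum_le_sum fun n _ => Real.rpow_le_rpow (norm_nonneg _)
    (norm_sum_ofReal_div_mul_le _ hlam (hΛ (n + 1) ▸ sum_nonneg fun i _ => hlam i) a)
    (by linarith)).trans
    (sum_weighted_mean_rpow_le hp hr0 hr hlam hΛ (fun k => norm_nonneg (a k)) hcond N hpos)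

end Weights

theorem stmt16 (p L : ℝ) (hp : 1 < p) (hL0 : 0 < L) (hLp : L < p)
    (lam : ℕ → ℝ) (hlam : ∀ i, 0 ≤ lam i) (hlam1 : 0 < lam 1)
    (Λ : ℕ → ℝ) (hΛ : ∀ n, Λ n = ∑ i ∈ Finset.Icc 1 n, lam i)
    (hcond : ∀ n : ℕ, 1 ≤ n →
      Λ (n + 1) / lam (n + 1) ≤
        (Λ n / lam n) * (1 - L * lam n / (p * Λ n)) ^ (1 - p) + L / p)
    (a : ℕ → ℂ) (ha : Summable fun n : ℕ => ‖a (n + 1)‖ ^ p) :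
    ∑' n : ℕ, ‖∑ k ∈ Finset.Icc 1 (n + 1), (↑(lam k / Λ (n + 1)) : ℂ) * a k‖ ^ p ≤
      (p / (p - L)) ^ p * ∑' n : ℕ, ‖a (n + 1)‖ ^ p := by
  have hp0 : 0 < p := by linarith
  have hr : L / p < 1 := (div_lt_one hp0).2 hLp
  replace hcond (n : ℕ) (hn : 1 ≤ n) :
      Λ (n + 1) / lam (n + 1) ≤ potential p (L / p) (Λ n / lam n) + L / p := by
    rw [potential, div_div, ← mul_div_assoc, div_div_eq_mul_div]
    exact hcond n hn
  have hpartial (N : ℕ) (hpos : ∀ k, 1 ≤ k → k ≤ N → 0 < lam k) :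
      ∑ n ∈ range N, ‖∑ k ∈ Icc 1 (n + 1), (↑(lam k / Λ (n + 1)) : ℂ) * a k‖ ^ p ≤
        (p / (p - L)) ^ p * ∑' n, ‖a (n + 1)‖ ^ p := by
    rw [show p / (p - L) = (1 - L / p)⁻¹ by field_simp]
    refine (sum_norm_weighted_mean_rpow_le hp.le (by positivity) hr hlam hΛ hcond a N hpos).trans ?_
    gcongr
    exact ha.sum_le_tsum _ fun n _ => by positivity
  rcases pos_or_eventually_eq_zero hr hlam hlam1 hΛ hcond with hall | ⟨m, hpos, hzero⟩
  · exact Real.tsum_le_of_sum_range_le (fun n => by positivity)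
      fun N => hpartial N fun k hk _ => hall k hk
  · refine tsum_le_of_eventually_const (fun n => by positivity) (fun n hn => ?_)
      (hpartial (m + 1) hpos)
    rw [weighted_mean_eq_of_forall_gt_eq_zero hΛ hzero (by omega : m + 1 ≤ n + 1)]
end
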